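/- Let a(n) = |S_{I,J}^{(k)}(n)| be the size of the code from Construction I'. Then a(n) = 0 for n \le k, a(k+1) = |I|^k |J|, a(k+2) = |I|^k |J|^2, and a(n) = q \cdot a(n-1) - |I|^k |J| \cdot a(n-k-1) for n \ge k+3. -/

import Mathlib

open List

namespace Stmt9Aux

variable {q k : ℕ} {I J : Finset (Fin q)}

def noRun (k : ℕ) (I : Finset (Fin q)) (u : List (Fin q)) : Prop :=
  ¬ ∃ v : List (Fin q), v.length = k ∧ (∀ x ∈ v, x ∈ I) ∧ v <:+: u

lemma noRun_mono {u w : List (Fin q)} (h : u <:+: w) (hw : noRun k I w) : noRun k I u := by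
  rintro ⟨v, h1, h2, h3⟩
  exact hw ⟨v, h1, h2, h3.trans h⟩

lemma memJ (hun : I ∪ J = Finset.univ) {x : Fin q} (hx : x ∉ I) : x ∈ J := by
  have : x ∈ I ∪ J := hun ▸ Finset.mem_univ x
  simpa [Finset.mem_union, hx] using this

lemma notI (hd : Disjoint I J) {x : Fin q} (hx : x ∈ J) : x ∉ I :=
  fun h => (Finset.disjoint_left.mp hd h) hx

lemma noRun_of_allJ (hk : 1 ≤ k) (hd : Disjoint I J) {u : List (Fin q)}
    (h : ∀ x ∈ u, x ∈ J) : noRun k I u := by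
  rintro ⟨v, h1, h2, h3⟩
  have hv : v ≠ [] := by intro e; rw [e] at h1; simp at h1; omega
  have hm : v.head hv ∈ u := h3.sublist.subset (head_mem hv)
  exact notI hd (h _ hm) (h2 _ (head_mem hv))

lemma noRun_concat (hk : 1 ≤ k) (hd : Disjoint I J) {u : List (Fin q)} {x : Fin q}
    (hu : noRun k I u) (hx : x ∈ J) : noRun k I (u ++ [x]) := by
  rintro ⟨v, h1, h2, p, t, hst⟩
  have hv : v ≠ [] := by intro e; rw [e] at h1; simp at h1; omega
  rcases eq_or_ne t [] with rfl | ht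
  · -- u ++ [x] = (p ++ v), so x is the last of v
    simp only [append_nil] at hst
    have hlen : (p ++ v).length = u.length + 1 := by rw [hst]; simp
    have e0 : (p ++ v)[u.length]'(by omega) = (u ++ [x])[u.length]'(by simp) :=
      getElem_of_eq hst _
    have e1 : (u ++ [x])[u.length]'(by simp) = x := by
      rw [getElem_append_right (le_refl _)]; simp
    have e2 : (p ++ v).getLast (by simp [hv]) = (p ++ v)[u.length]'(by omega) := by
      rw [getLast_eq_getElem]
      exact getElem_of_eq rfl (by omega) |>.trans (by congr 1; omega)
    have e3 : (p ++ v).getLast (by simp [hv]) = v.getLast hv := getLast_append_of_right_ne_nil p v hv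
    have : v.getLast hv = x := by rw [← e3, e2, e0, e1]
    exact notI hd hx (this ▸ h2 _ (getLast_mem hv))
  · have h5 : (p ++ v) ++ t.dropLast = u := by
      have h4 := congrArg List.dropLast hst
      rwa [dropLast_concat, dropLast_append, if_neg (by simp [ht])] at h4
    exact hu ⟨v, h1, h2, p, t.dropLast, h5⟩

lemma noRun_append_short (hd : Disjoint I J) {s r : List (Fin q)}
    (hs : noRun k I s) (hne : s ≠ []) (hlast : s.getLast hne ∈ J)
    (hr : ∀ x ∈ r, x ∈ I) (hrk : r.length < k) : noRun k I (s ++ r) := by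
  rintro ⟨v, h1, h2, p, t, hst⟩
  have hlen : p.length + k + t.length = s.length + r.length := by
    have := congrArg List.length hst
    simp at this; omega
  rcases le_or_gt (p.length + k) s.length with hle | hlt
  · -- v is inside s
    apply hs
    have hpre1 : p ++ v <+: s ++ r := ⟨t, by rw [← hst]⟩
    have hpre2 : p ++ v <+: s :=
      prefix_of_prefix_length_le hpre1 (prefix_append s r) (by simp; omega)
    obtain ⟨t2, ht2⟩ := hpre2
    exact ⟨v, h1, h2, p, t2, ht2⟩
  · -- the last element of s is inside v
    have hps : p.length < s.length := by omega
    set j := s.length - 1 - p.length with hj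
    have hjv : j < v.length := by omega
    have e1 : (p ++ v ++ t)[s.length - 1]'(by simp; omega) = v[j]'hjv := by
      have a1 : (p ++ v ++ t)[s.length - 1]'(by simp; omega)
          = (p ++ (v ++ t))[s.length - 1]'(by simp; omega) := getElem_of_eq (by simp) _
      have a2 : (p ++ (v ++ t))[s.length - 1]'(by simp; omega)
          = (v ++ t)[s.length - 1 - p.length]'(by simp; omega) :=
        getElem_append_right (by omega)
      have a3 : (v ++ t)[s.length - 1 - p.length]'(by simp; omega) = v[j]'hjv :=
        getElem_append_left hjv
      rw [a1, a2, a3]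
    have e2 : (p ++ v ++ t)[s.length - 1]'(by simp; omega)
        = (s ++ r)[s.length - 1]'(by simp; omega) := getElem_of_eq hst _
    have e3 : (s ++ r)[s.length - 1]'(by simp; omega) = s[s.length - 1]'(by omega) :=
      getElem_append_left (by omega)
    have : s.getLast hne ∈ I := by
      rw [getLast_eq_getElem, ← e3, ← e2, e1]
      exact h2 _ (getElem_mem _)
    exact notI hd hlast this



lemma finite_aux (n : ℕ) (P : List (Fin q) → Prop) :
    Finite {w : List (Fin q) // w.length = n ∧ P w} := by
  haveI : Finite {l : List (Fin q) // l.length = n} :=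
    Finite.of_fintype (List.Vector (Fin q) n)
  exact Finite.of_injective
    (fun (w : {w : List (Fin q) // w.length = n ∧ P w}) =>
      (⟨w.1, w.2.1⟩ : {l : List (Fin q) // l.length = n}))
    (fun a b h => by
      have h2 := congrArg Subtype.val h
      exact Subtype.ext h2)

lemma card_split {β : Type*} (P Q : β → Prop) [Finite {x : β // P x}] :
    Nat.card {x : β // P x} =
      Nat.card {x : β // P x ∧ Q x} + Nat.card {x : β // P x ∧ ¬ Q x} := by
  classical
  calc Nat.card {x : β // P x}
      = Nat.card ({y : {x : β // P x} // Q y.1} ⊕ {y : {x : β // P x} // ¬ Q y.1}) :=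
        (Nat.card_congr (Equiv.sumCompl _)).symm
    _ = Nat.card {y : {x : β // P x} // Q y.1} + Nat.card {y : {x : β // P x} // ¬ Q y.1} :=
        Nat.card_sum
    _ = _ := by
        rw [Nat.card_congr (Equiv.subtypeSubtypeEquivSubtypeInter P Q),
          Nat.card_congr (Equiv.subtypeSubtypeEquivSubtypeInter P (fun x => ¬ Q x))]

lemma card_allI : ∀ n : ℕ,
    Nat.card {v : List (Fin q) // v.length = n ∧ ∀ x ∈ v, x ∈ I} = I.card ^ n
  | 0 => by
    rw [pow_zero]
    have e : {v : List (Fin q) // v.length = 0 ∧ ∀ x ∈ v, x ∈ I} ≃ Unit :=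
      { toFun := fun _ => Unit.unit
        invFun := fun _ => ⟨[], rfl, by simp⟩
        left_inv := by rintro ⟨v, hv, -⟩; ext; simp [length_eq_zero_iff.mp hv]
        right_inv := fun _ => rfl }
    rw [Nat.card_congr e]; simp
  | (n+1) => by
    have e : {v : List (Fin q) // v.length = n + 1 ∧ ∀ x ∈ v, x ∈ I} ≃
        {x : Fin q // x ∈ I} × {v : List (Fin q) // v.length = n ∧ ∀ x ∈ v, x ∈ I} :=
      { toFun := fun v => (⟨v.1.head (by
            have hv := v.2.1; intro h; rw [h] at hv; simp at hv),
          v.2.2 _ (head_mem _)⟩,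
          ⟨v.1.tail, by simp [v.2.1], fun x hx => v.2.2 _ (mem_of_mem_tail hx)⟩)
        invFun := fun p => ⟨p.1.1 :: p.2.1, by simp [p.2.2.1], by
          rintro x hx
          rcases mem_cons.mp hx with rfl | hx
          · exact p.1.2
          · exact p.2.2.2 _ hx⟩
        left_inv := by rintro ⟨v, hv, hI⟩; ext : 1; simp [cons_head_tail]
        right_inv := by rintro ⟨⟨x, hx⟩, ⟨v, hv, hI⟩⟩; simp }
    rw [Nat.card_congr e, Nat.card_prod, card_allI n, pow_succ]
    have : Nat.card {x : Fin q // x ∈ I} = I.card := by simp [Nat.card_eq_fintype_card]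
    rw [this]; ring



-- getD helpers
lemma getD_drop (u : List (Fin q)) (d : Fin q) (i j : ℕ) (h : i + j < u.length) :
    (u.drop i).getD j d = u.getD (i + j) d := by
  rw [getD_eq_getElem _ _ (by simp; omega), getD_eq_getElem _ _ h, getElem_drop]

lemma getD_take (u : List (Fin q)) (d : Fin q) {n i : ℕ} (h1 : i < n) (h2 : i < u.length) :
    (u.take n).getD i d = u.getD i d := by
  rw [getD_eq_getElem _ _ (by simp; omega), getD_eq_getElem _ _ h2, getElem_take]

lemma getD_append_left' (s r : List (Fin q)) (d : Fin q) {i : ℕ} (h : i < s.length) :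
    (s ++ r).getD i d = s.getD i d := by
  rw [getD_eq_getElem _ _ (by simp; omega), getD_eq_getElem _ _ h, getElem_append_left]

lemma getD_dropLast (u : List (Fin q)) (d : Fin q) {i : ℕ} (h : i < u.length - 1) :
    u.dropLast.getD i d = u.getD i d := by
  rw [getD_eq_getElem _ _ (by simp; omega), getD_eq_getElem _ _ (by omega),
    getElem_dropLast]

lemma getD_concat (u : List (Fin q)) (x d : Fin q) :
    (u ++ [x]).getD u.length d = x := by
  rw [getD_eq_getElem _ _ (by simp)]
  rw [getElem_append_right (le_refl _)]
  simp

lemma getLast_eq_getD (u : List (Fin q)) (d : Fin q) (h : u ≠ []) :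
    u.getLast h = u.getD (u.length - 1) d := by
  rw [getD_eq_getElem _ _ (by cases u <;> simp_all), getLast_eq_getElem]

lemma memI (hun : I ∪ J = Finset.univ) {x : Fin q} (hx : x ∉ J) : x ∈ I := by
  have : x ∈ I ∪ J := hun ▸ Finset.mem_univ x
  simpa [Finset.mem_union, hx] using this

-- cardinalities
noncomputable def cC (q k : ℕ) (I J : Finset (Fin q)) (d : Fin q) (m : ℕ) : ℕ :=
  Nat.card {u : List (Fin q) // u.length = m ∧ u.getD 0 d ∈ J ∧ u.getD (m-1) d ∈ J ∧
    noRun k I u}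

noncomputable def dD (q k : ℕ) (I J : Finset (Fin q)) (d : Fin q) (m : ℕ) : ℕ :=
  Nat.card {u : List (Fin q) // u.length = m ∧ u.getD 0 d ∈ J ∧ noRun k I u}

noncomputable def eE (q k : ℕ) (I J : Finset (Fin q)) (d : Fin q) (m : ℕ) : ℕ :=
  Nat.card {u : List (Fin q) // u.length = m ∧ u.getD 0 d ∈ J ∧ noRun k I u.dropLast}

noncomputable def bB (q k : ℕ) (I J : Finset (Fin q)) (d : Fin q) (m : ℕ) : ℕ :=
  Nat.card {u : List (Fin q) // (u.length = m ∧ u.getD 0 d ∈ J ∧ noRun k I u.dropLast) ∧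
    ¬ noRun k I u}

lemma card_Jcoe : Nat.card {x : Fin q // x ∈ J} = J.card := by
  simp [Nat.card_eq_fintype_card]

/-- the prefix decomposition -/
lemma cardA (hk : 1 ≤ k) {d : Fin q} {m : ℕ} (hm : 1 ≤ m) :
    Nat.card {w : List (Fin q) // w.length = k + m ∧ (∀ x ∈ w.take k, x ∈ I) ∧
      w.getD k d ∈ J ∧ w.getD (k + m - 1) d ∈ J ∧
      ¬ ∃ v : List (Fin q), v.length = k ∧ (∀ x ∈ v, x ∈ I) ∧ v <:+: w.drop k} =
    I.card ^ k * cC q k I J d m := by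
  rw [cC, ← card_allI k, ← Nat.card_prod]
  apply Nat.card_congr
  refine
    { toFun := fun w => (⟨w.1.take k, by simp [w.2.1], fun x hx => w.2.2.1 x hx⟩,
        ⟨w.1.drop k, ?_⟩)
      invFun := fun p => ⟨p.1.1 ++ p.2.1, ?_⟩
      left_inv := ?_
      right_inv := ?_ }
  · obtain ⟨len, hIp, hJ1, hJ2, hNR⟩ := w.2
    refine ⟨by simp [len], ?_, ?_, hNR⟩
    · rw [getD_drop _ _ _ _ (by omega)]
      simpa using hJ1
    · rw [getD_drop _ _ _ _ (by omega)]
      have : k + (m - 1) = k + m - 1 := by omega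
      rw [this]; exact hJ2
  · obtain ⟨⟨s, hs1, hs2⟩, ⟨u, hu1, hu2, hu3, hu4⟩⟩ := p
    dsimp only
    refine ⟨by simp [hs1, hu1], ?_, ?_, ?_, ?_⟩
    · intro x hx
      rw [take_left' hs1] at hx
      exact hs2 x hx
    · rw [show k = s.length + 0 by omega]
      rw [getD_eq_getElem _ _ (by simp; omega), getElem_append_right (by omega)]
      rw [← getD_eq_getElem _ d (by omega)]
      simpa [hs1] using hu2
    · rw [show k + m - 1 = s.length + (m - 1) by omega]
      rw [getD_eq_getElem _ _ (by simp; omega), getElem_append_right (by omega)]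
      rw [← getD_eq_getElem _ d (by omega)]
      simpa [hs1] using hu3
    · rw [drop_left' hs1]
      exact hu4
  · rintro ⟨w, hw⟩
    apply Subtype.ext
    simp [take_append_drop]
  · rintro ⟨⟨s, hs1, hs2⟩, ⟨u, hu⟩⟩
    have e1 : (s ++ u).take k = s := take_left' hs1
    have e2 : (s ++ u).drop k = u := drop_left' hs1
    simp only [Prod.mk.injEq, Subtype.mk.injEq]
    exact ⟨e1, e2⟩

lemma cC_one (hk : 1 ≤ k) (hd : Disjoint I J) {d : Fin q} :
    cC q k I J d 1 = J.card := by
  rw [cC, ← card_Jcoe]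
  apply Nat.card_congr
  refine
    { toFun := fun u => ⟨u.1.getD 0 d, u.2.2.1⟩
      invFun := fun x => ⟨[x.1], rfl, by simpa using x.2, by simpa using x.2,
        noRun_of_allJ hk hd (by intro y hy; simp at hy; subst hy; exact x.2)⟩
      left_inv := ?_
      right_inv := ?_ }
  · rintro ⟨u, h1, h2, h3, h4⟩
    obtain ⟨a, rfl⟩ := length_eq_one_iff.mp h1
    apply Subtype.ext
    simp
  · rintro ⟨x, hx⟩
    simp

lemma cC_two (hk : 1 ≤ k) (hd : Disjoint I J) {d : Fin q} :
    cC q k I J d 2 = J.card * J.card := by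
  rw [cC, ← card_Jcoe, ← Nat.card_prod]
  apply Nat.card_congr
  refine
    { toFun := fun u => (⟨u.1.getD 0 d, u.2.2.1⟩, ⟨u.1.getD 1 d, u.2.2.2.1⟩)
      invFun := fun p => ⟨[p.1.1, p.2.1], rfl, by simpa using p.1.2, by simpa using p.2.2,
        noRun_of_allJ hk hd (by
          intro y hy; simp at hy
          rcases hy with rfl | rfl
          exacts [p.1.2, p.2.2])⟩
      left_inv := ?_
      right_inv := ?_ }
  · rintro ⟨u, h1, h2, h3, h4⟩
    obtain ⟨a, b, rfl⟩ := length_eq_two.mp h1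
    apply Subtype.ext
    simp [getD_cons_succ]
  · rintro ⟨⟨x, hx⟩, ⟨y, hy⟩⟩
    simp [getD_cons_succ]

lemma cC_step (hk : 1 ≤ k) (hd : Disjoint I J) {d : Fin q} {m : ℕ} (hm : 1 ≤ m) :
    cC q k I J d (m + 1) = J.card * dD q k I J d m := by
  rw [cC, dD, ← card_Jcoe, ← Nat.card_prod]
  apply Nat.card_congr
  have hne : ∀ u : List (Fin q), u.length = m + 1 → u ≠ [] := by
    rintro u hu rfl; simp at hu
  refine
    { toFun := fun u => (⟨u.1.getLast (hne _ u.2.1), ?_⟩, ⟨u.1.dropLast, ?_, ?_, ?_⟩)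
      invFun := fun p => ⟨p.2.1 ++ [p.1.1], ?_, ?_, ?_, ?_⟩
      left_inv := ?_
      right_inv := ?_ }
  · obtain ⟨h1, h2, h3, h4⟩ := u.2
    rw [getLast_eq_getD _ d, h1]
    simpa using h3
  · simp [u.2.1]
  · rw [getD_dropLast _ _ (by rw [u.2.1]; omega)]
    exact u.2.2.1
  · exact noRun_mono (u.1.dropLast_prefix).isInfix u.2.2.2.2
  · simp [p.2.2.1]
  · rw [getD_append_left' _ _ _ (by rw [p.2.2.1]; omega)]
    exact p.2.2.2.1
  · have : m + 1 - 1 = p.2.1.length := by simp [p.2.2.1]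
    rw [this, getD_concat]
    exact p.1.2
  · exact noRun_concat hk hd p.2.2.2.2 p.1.2
  · rintro ⟨u, hu⟩
    apply Subtype.ext
    simp [dropLast_append_getLast]
  · rintro ⟨⟨x, hx⟩, ⟨u, hu⟩⟩
    simp only [Prod.mk.injEq, Subtype.mk.injEq]
    exact ⟨getLast_concat, dropLast_concat⟩

lemma eE_step (hk : 1 ≤ k) {d : Fin q} {m : ℕ} (hm : 1 ≤ m) :
    eE q k I J d (m + 1) = q * dD q k I J d m := by
  have hq : q * dD q k I J d m = Nat.card (Fin q) *
      Nat.card {u : List (Fin q) // u.length = m ∧ u.getD 0 d ∈ J ∧ noRun k I u} := by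
    rw [dD]; simp
  rw [eE, hq, ← Nat.card_prod]
  apply Nat.card_congr
  have hne : ∀ u : List (Fin q), u.length = m + 1 → u ≠ [] := by
    rintro u hu rfl; simp at hu
  refine
    { toFun := fun u => (u.1.getLast (hne _ u.2.1), ⟨u.1.dropLast, ?_, ?_, ?_⟩)
      invFun := fun p => ⟨p.2.1 ++ [p.1], ?_, ?_, ?_⟩
      left_inv := ?_
      right_inv := ?_ }
  · simp [u.2.1]
  · rw [getD_dropLast _ _ (by rw [u.2.1]; omega)]
    exact u.2.2.1
  · exact u.2.2.2
  · simp [p.2.2.1]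
  · rw [getD_append_left' _ _ _ (by rw [p.2.2.1]; omega)]
    exact p.2.2.2.1
  · rw [dropLast_concat]
    exact p.2.2.2.2
  · rintro ⟨u, hu⟩
    apply Subtype.ext
    simp [dropLast_append_getLast]
  · rintro ⟨x, ⟨u, hu⟩⟩
    simp only [Prod.mk.injEq, Subtype.mk.injEq]
    exact ⟨getLast_concat, dropLast_concat⟩

lemma eE_split {d : Fin q} (m : ℕ) :
    eE q k I J d m = dD q k I J d m + bB q k I J d m := by
  rw [eE, dD, bB]
  have hsplit := @card_split (List (Fin q))
    (fun u => u.length = m ∧ u.getD 0 d ∈ J ∧ noRun k I u.dropLast)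
    (fun u => ¬ noRun k I u)
    (finite_aux m _)
  rw [hsplit]
  have e : {u : List (Fin q) // (u.length = m ∧ u.getD 0 d ∈ J ∧ noRun k I u.dropLast) ∧
      ¬ ¬ noRun k I u} ≃
      {u : List (Fin q) // u.length = m ∧ u.getD 0 d ∈ J ∧ noRun k I u} := by
    apply Equiv.subtypeEquivRight
    intro u
    constructor
    · rintro ⟨⟨h1, h2, h3⟩, h4⟩
      exact ⟨h1, h2, not_not.mp h4⟩
    · rintro ⟨h1, h2, h3⟩
      exact ⟨⟨h1, h2, noRun_mono (u.dropLast_prefix).isInfix h3⟩, not_not.mpr h3⟩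
  have e1 : {x : List (Fin q) //
      (fun u : List (Fin q) => u.length = m ∧ u.getD 0 d ∈ J ∧ noRun k I u.dropLast) x ∧
      (fun u : List (Fin q) => ¬ noRun k I u) x} ≃
      {u : List (Fin q) // (u.length = m ∧ u.getD 0 d ∈ J ∧ noRun k I u.dropLast) ∧
      ¬ noRun k I u} := Equiv.subtypeEquivRight (fun u => Iff.rfl)
  rw [Nat.card_congr e, Nat.card_congr e1]
  omega

lemma bB_small (hk : 1 ≤ k) (hd : Disjoint I J) {d : Fin q} {m : ℕ}
    (hm1 : 1 ≤ m) (hmk : m ≤ k) : bB q k I J d m = 0 := by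
  rw [bB, Nat.card_eq_zero]
  left
  constructor
  rintro ⟨u, ⟨len, hJ0, -⟩, hR⟩
  obtain ⟨v, hv1, hv2, p, t, hst⟩ := not_not.mp hR
  have hlen : p.length + k + t.length = m := by
    have := congrArg List.length hst
    simp [len] at this; omega
  have hp : p = [] := by
    have : p.length = 0 := by omega
    exact length_eq_zero_iff.mp this
  have ht : t = [] := by
    have : t.length = 0 := by omega
    exact length_eq_zero_iff.mp this
  subst hp ht
  simp only [nil_append, append_nil] at hst
  subst hst
  have h0 : v.getD 0 d ∈ I := by
    rw [getD_eq_getElem _ _ (by omega)]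
    exact hv2 _ (getElem_mem _)
  exact notI hd hJ0 h0

lemma bB_big (hk : 1 ≤ k) (hd : Disjoint I J) (hun : I ∪ J = Finset.univ)
    {d : Fin q} {m : ℕ} (hm : 1 ≤ m) :
    bB q k I J d (k + m) = cC q k I J d m * I.card ^ k := by
  rw [bB, cC, ← card_allI k, ← Nat.card_prod]
  apply Nat.card_congr
  -- structure lemma, inline as a `have`
  have struct : ∀ u : List (Fin q), u.length = k + m → u.getD 0 d ∈ J →
      noRun k I u.dropLast → ¬ noRun k I u →
      (∃ p v : List (Fin q), u = p ++ v ∧ p.length = m ∧ v.length = k ∧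
        (∀ x ∈ v, x ∈ I) ∧ noRun k I p ∧ p.getD 0 d ∈ J ∧ p.getD (m - 1) d ∈ J) := by
    intro u len hJ0 hNDL hR
    obtain ⟨v, hv1, hv2, p, t, hst⟩ := not_not.mp hR
    have hvne : v ≠ [] := by
      rintro rfl; rw [length_eq_zero_iff.mpr rfl] at hv1; omega
    rcases eq_or_ne t [] with rfl | ht
    · simp only [append_nil] at hst
      have hp : p.length = m := by
        have := congrArg List.length hst
        simp [len, hv1] at this; omega
      have hdl : u.dropLast = p ++ v.dropLast := by
        rw [← hst, dropLast_append, if_neg (by simp [hvne])]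
      have hpne : p ≠ [] := by
        rintro rfl; rw [length_eq_zero_iff.mpr rfl] at hp; omega
      have hNRp : noRun k I p := by
        apply noRun_mono _ hNDL
        rw [hdl]
        exact (prefix_append p v.dropLast).isInfix
      have hpJ0 : p.getD 0 d ∈ J := by
        have : u.getD 0 d = p.getD 0 d := by
          rw [← hst, getD_append_left' _ _ _ (by omega)]
        rwa [this] at hJ0
      have hplast : p.getD (m - 1) d ∈ J := by
        by_contra hnot
        have hin : p.getD (m - 1) d ∈ I := memI hun hnot
        apply hNDL
        refine ⟨p.drop (m - 1) ++ v.dropLast, ?_, ?_, p.take (m - 1), [], ?_⟩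
        · have h1 : (p.drop (m - 1)).length = 1 := by simp [hp]; omega
          have h2 : v.dropLast.length = k - 1 := by simp [hv1]
          simp [h1, h2]; omega
        · intro x hx
          rcases mem_append.mp hx with hx | hx
          · have hdropeq : p.drop (m - 1) = [p[m-1]'(by omega)] := by
              rw [drop_eq_getElem_cons (by omega)]
              have : p.drop (m - 1 + 1) = [] := by
                apply drop_eq_nil_of_le; omega
              rw [this]
            rw [hdropeq] at hx
            simp at hx
            subst hx
            rwa [getD_eq_getElem _ _ (by omega)] at hin
          · exact hv2 _ ((dropLast_sublist v).subset hx)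
        · rw [append_nil, ← append_assoc, take_append_drop, hdl]
      exact ⟨p, v, hst.symm, hp, hv1, hv2, hNRp, hpJ0, hplast⟩
    · exfalso
      apply hNDL
      have h5 : (p ++ v) ++ t.dropLast = u.dropLast := by
        have h4 := congrArg List.dropLast hst
        rwa [dropLast_append, if_neg (by simp [ht])] at h4
      exact ⟨v, hv1, hv2, p, t.dropLast, h5⟩
  refine
    { toFun := fun u => (⟨u.1.take m, ?_⟩, ⟨u.1.drop m, ?_⟩)
      invFun := fun p => ⟨p.1.1 ++ p.2.1, ?_⟩
      left_inv := ?_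
      right_inv := ?_ }
  · obtain ⟨⟨len, hJ0, hNDL⟩, hR⟩ := u.2
    obtain ⟨p, v, hEq, hp, hv1, hv2, hNRp, hpJ0, hplast⟩ := struct u.1 len hJ0 hNDL hR
    rw [hEq, take_left' hp]
    exact ⟨hp, hpJ0, hplast, hNRp⟩
  · obtain ⟨⟨len, hJ0, hNDL⟩, hR⟩ := u.2
    obtain ⟨p, v, hEq, hp, hv1, hv2, hNRp, hpJ0, hplast⟩ := struct u.1 len hJ0 hNDL hR
    rw [hEq, drop_left' hp]
    exact ⟨hv1, hv2⟩
  · obtain ⟨⟨s, hs1, hs2, hs3, hs4⟩, ⟨v, hv1, hv2⟩⟩ := p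
    dsimp only
    have hsne : s ≠ [] := by
      rintro rfl; rw [length_eq_zero_iff.mpr rfl] at hs1; omega
    have hvne : v ≠ [] := by
      rintro rfl; rw [length_eq_zero_iff.mpr rfl] at hv1; omega
    refine ⟨⟨by simp [hs1, hv1, Nat.add_comm], ?_, ?_⟩, ?_⟩
    · rw [getD_append_left' _ _ _ (by omega)]
      exact hs2
    · rw [dropLast_append, if_neg (by simp [hvne])]
      apply noRun_append_short hd hs4 hsne
      · rw [getLast_eq_getD _ d, hs1]
        exact hs3
      · intro x hx
        exact hv2 _ ((dropLast_sublist v).subset hx)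
      · simp [hv1]; omega
    · intro hNR
      exact hNR ⟨v, hv1, hv2, s, [], by simp⟩
  · rintro ⟨u, hu⟩
    apply Subtype.ext
    simp [take_append_drop]
  · rintro ⟨⟨s, hs⟩, ⟨v, hv⟩⟩
    simp only [Prod.mk.injEq, Subtype.mk.injEq]
    exact ⟨take_left' hs.1, drop_left' hs.1⟩

end Stmt9Aux

/-- Let `a n = |S_{I,J}^{(k)}(n)|` be the size of the code from
Construction I'. Then `a n = 0` for `n ≤ k`, `a (k+1) = |I|^k |J|`,
`a (k+2) = |I|^k |J|²`, and `a n = q·a (n-1) - |I|^k|J|·a (n-k-1)` for `n ≥ k+3`. -/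
theorem stmt9 (q k : ℕ) (hq : 2 ≤ q) (hk : 1 ≤ k)
    (I J : Finset (Fin q)) (hI : I.Nonempty) (hJ : J.Nonempty)
    (hd : Disjoint I J) (hun : I ∪ J = Finset.univ)
    (a : ℤ → ℕ)
    (h0 : ∀ m : ℤ, m ≤ k → a m = 0)
    (hcard : ∀ m : ℕ, k + 1 ≤ m → a m = Nat.card {w : List (Fin q) //
      w.length = m ∧ (∀ x ∈ w.take k, x ∈ I) ∧
      w.getD k ⟨0, by omega⟩ ∈ J ∧ w.getD (m - 1) ⟨0, by omega⟩ ∈ J ∧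
      ¬ ∃ v : List (Fin q), v.length = k ∧ (∀ x ∈ v, x ∈ I) ∧ v <:+: w.drop k}) :
    a (k + 1) = I.card ^ k * J.card ∧ a (k + 2) = I.card ^ k * J.card ^ 2 ∧
      ∀ n : ℤ, (k : ℤ) + 3 ≤ n →
        (a n : ℤ) = q * a (n - 1) - I.card ^ k * J.card * a (n - k - 1) := by
  have hq0 : 0 < q := by omega
  refine ⟨?_, ?_, ?_⟩
  · rw [show ((k : ℤ) + 1) = ((k + 1 : ℕ) : ℤ) by push_cast; ring,
      hcard (k + 1) (le_refl _)]
    exact (Stmt9Aux.cardA hk (le_refl 1)).trans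
      (by rw [Stmt9Aux.cC_one hk hd])
  · rw [show ((k : ℤ) + 2) = ((k + 2 : ℕ) : ℤ) by push_cast; ring,
      hcard (k + 2) (by omega)]
    exact (Stmt9Aux.cardA hk (by omega)).trans
      (by rw [Stmt9Aux.cC_two hk hd]; ring)
  · intro n hn
    obtain ⟨r, rfl⟩ : ∃ r : ℕ, n = ((k + (r + 3) : ℕ) : ℤ) := ⟨(n - k - 3).toNat, by omega⟩
    have e1 : a ((k + (r + 3) : ℕ) : ℤ) = I.card ^ k * Stmt9Aux.cC q k I J ⟨0, hq0⟩ (r + 3) :=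
      (hcard _ (by omega)).trans (Stmt9Aux.cardA hk (by omega))
    have e2 : a ((k + (r + 2) : ℕ) : ℤ) = I.card ^ k * Stmt9Aux.cC q k I J ⟨0, hq0⟩ (r + 2) :=
      (hcard _ (by omega)).trans (Stmt9Aux.cardA hk (by omega))
    have e3 : Stmt9Aux.cC q k I J ⟨0, hq0⟩ (r + 3) = J.card * Stmt9Aux.dD q k I J ⟨0, hq0⟩ (r + 2) := Stmt9Aux.cC_step hk hd (by omega)
    have e4 : Stmt9Aux.cC q k I J ⟨0, hq0⟩ (r + 2) = J.card * Stmt9Aux.dD q k I J ⟨0, hq0⟩ (r + 1) := Stmt9Aux.cC_step hk hd (by omega)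
    have e5 : Stmt9Aux.eE q k I J ⟨0, hq0⟩ (r + 2) = q * Stmt9Aux.dD q k I J ⟨0, hq0⟩ (r + 1) := Stmt9Aux.eE_step hk (by omega)
    have e6 : Stmt9Aux.eE q k I J ⟨0, hq0⟩ (r + 2) = Stmt9Aux.dD q k I J ⟨0, hq0⟩ (r + 2) + Stmt9Aux.bB q k I J ⟨0, hq0⟩ (r + 2) := Stmt9Aux.eE_split _
    have c1 : ((k + (r + 3) : ℕ) : ℤ) - 1 = ((k + (r + 2) : ℕ) : ℤ) := by push_cast; ring
    rcases le_or_gt (k + 1) (r + 2) with hcase | hcase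
    · obtain ⟨s, hs, hs1⟩ : ∃ s : ℕ, r + 2 = k + s ∧ 1 ≤ s := ⟨r + 2 - k, by omega, by omega⟩
      have e7 : Stmt9Aux.bB q k I J ⟨0, hq0⟩ (r + 2) = Stmt9Aux.cC q k I J ⟨0, hq0⟩ s * I.card ^ k := by
        rw [hs]; exact Stmt9Aux.bB_big hk hd hun hs1
      have e8 : a ((k + s : ℕ) : ℤ) = I.card ^ k * Stmt9Aux.cC q k I J ⟨0, hq0⟩ s :=
        (hcard _ (by omega)).trans (Stmt9Aux.cardA hk hs1)
      have c2 : ((k + (r + 3) : ℕ) : ℤ) - (k : ℤ) - 1 = ((k + s : ℕ) : ℤ) := by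
        push_cast; omega
      rw [c1, c2, e1, e2, e8]
      have key : q * (I.card ^ k * Stmt9Aux.cC q k I J ⟨0, hq0⟩ (r + 2)) =
          I.card ^ k * Stmt9Aux.cC q k I J ⟨0, hq0⟩ (r + 3) + I.card ^ k * J.card * (I.card ^ k * Stmt9Aux.cC q k I J ⟨0, hq0⟩ s) := by
        calc q * (I.card ^ k * Stmt9Aux.cC q k I J ⟨0, hq0⟩ (r + 2))
            = I.card ^ k * J.card * (q * Stmt9Aux.dD q k I J ⟨0, hq0⟩ (r + 1)) := by rw [e4]; ring
          _ = I.card ^ k * J.card * (Stmt9Aux.dD q k I J ⟨0, hq0⟩ (r + 2) + Stmt9Aux.bB q k I J ⟨0, hq0⟩ (r + 2)) := by rw [← e5, e6]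
          _ = I.card ^ k * (J.card * Stmt9Aux.dD q k I J ⟨0, hq0⟩ (r + 2)) +
              I.card ^ k * J.card * (Stmt9Aux.cC q k I J ⟨0, hq0⟩ s * I.card ^ k) := by rw [e7]; ring
          _ = _ := by rw [← e3]; ring
      have keyz := congrArg (Nat.cast (R := ℤ)) key
      push_cast at keyz ⊢
      linarith [keyz]
    · have e7 : Stmt9Aux.bB q k I J ⟨0, hq0⟩ (r + 2) = 0 := Stmt9Aux.bB_small hk hd (by omega) (by omega)
      have c2 : ((k + (r + 3) : ℕ) : ℤ) - (k : ℤ) - 1 = ((r + 2 : ℕ) : ℤ) := by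
        push_cast; ring
      have e8 : a ((r + 2 : ℕ) : ℤ) = 0 := h0 _ (by push_cast; omega)
      rw [c1, c2, e1, e2, e8]
      have key : q * (I.card ^ k * Stmt9Aux.cC q k I J ⟨0, hq0⟩ (r + 2)) = I.card ^ k * Stmt9Aux.cC q k I J ⟨0, hq0⟩ (r + 3) := by
        calc q * (I.card ^ k * Stmt9Aux.cC q k I J ⟨0, hq0⟩ (r + 2))
            = I.card ^ k * J.card * (q * Stmt9Aux.dD q k I J ⟨0, hq0⟩ (r + 1)) := by rw [e4]; ring
          _ = I.card ^ k * J.card * (Stmt9Aux.dD q k I J ⟨0, hq0⟩ (r + 2) + Stmt9Aux.bB q k I J ⟨0, hq0⟩ (r + 2)) := by rw [← e5, e6]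
          _ = I.card ^ k * (J.card * Stmt9Aux.dD q k I J ⟨0, hq0⟩ (r + 2)) := by rw [e7]; ring
          _ = _ := by rw [← e3]
      have keyz := congrArg (Nat.cast (R := ℤ)) key
      push_cast at keyz ⊢
      linarith [keyz]
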